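/- Let R be a commutative Noetherian ring with unity, H a finitely generated abelian group of positive rank, and I a proper ideal of RH. For every nonzero group homomorphism χ : H → ℝ, one has in_χ(I) ≠ RH if and only if RH/I is NOT finitely generated as an RH_χ-module. (In other words, the projection of the tropical variety Trop_R(I) to the character sphere equals Σ^c(RH/I).) -/

import Mathlib

open AddMonoidAlgebra

/-- The subring `RH_χ` of the group algebra `R[H]` consisting of elements supported on
the submonoid `H_χ = {h : χ h ≥ 0}`. -/
def coneSubring (R : Type*) [CommRing R] {H : Type*} [AddCommGroup H] (χ : H →+ ℝ) :
    Subring (AddMonoidAlgebra R H) where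
  carrier := {f | ∀ h ∈ f.coeff.support, 0 ≤ χ h}
  zero_mem' := by simp
  one_mem' := by
    classical
    intro h hh
    have h0 : h = 0 := by
      have : h ∈ ({0} : Finset H) := AddMonoidAlgebra.support_coeff_one_subset hh
      simpa using this
    simp [h0]
  add_mem' := by
    classical
    intro a b ha hb h hh
    rcases Finset.mem_union.mp (Finsupp.support_add hh) with h' | h'
    · exact ha h h'
    · exact hb h h'
  mul_mem' := by
    classical
    intro a b ha hb h hh
    have h2 := AddMonoidAlgebra.support_coeff_mul_subset a b hh
    rcases Finset.mem_add.mp h2 with ⟨x, hx, y, hy, rfl⟩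
    have := add_nonneg (ha x hx) (hb y hy)
    simpa using this
  neg_mem' := by
    intro a ha h hh
    exact ha h (by rwa [AddMonoidAlgebra.coeff_neg, Finsupp.support_neg] at hh)

/-- The initial form `in_χ(f)`: the sum of the terms of `f` on which `χ` attains its minimum
over the support of `f` (for `f = 0` this is `0`). -/
noncomputable def initialForm {R H : Type*} [CommRing R] [AddCommGroup H] (χ : H →+ ℝ)
    (f : AddMonoidAlgebra R H) : AddMonoidAlgebra R H :=
  haveI : DecidablePred (fun h => ∀ h' ∈ f.coeff.support, χ h ≤ χ h') := Classical.decPred _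
  AddMonoidAlgebra.ofCoeff (Finsupp.filter (fun h => ∀ h' ∈ f.coeff.support, χ h ≤ χ h') f.coeff)

/-- The initial ideal `in_χ(I)`, generated by the initial forms of the nonzero elements
of `I`. -/
noncomputable def initialIdeal {R H : Type*} [CommRing R] [AddCommGroup H] (χ : H →+ ℝ)
    (I : Ideal (AddMonoidAlgebra R H)) : Ideal (AddMonoidAlgebra R H) :=
  Ideal.span {g | ∃ f ∈ I, f ≠ 0 ∧ g = initialForm χ f}

namespace Statement8Aux

open Finsupp Polynomial

variable {R H : Type*} [CommRing R] [AddCommGroup H] (χ : H →+ ℝ)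

/-- The `χ`-level-`d` component of an element of the group algebra. -/
noncomputable def comp (d : ℝ) (f : AddMonoidAlgebra R H) : AddMonoidAlgebra R H :=
  haveI : DecidablePred (fun h : H => χ h = d) := Classical.decPred _
  AddMonoidAlgebra.ofCoeff (Finsupp.filter (fun h : H => χ h = d) f.coeff)

@[simp] lemma add_apply' (f g : AddMonoidAlgebra R H) (a : H) : (f + g).coeff a = f.coeff a + g.coeff a := rfl
@[simp] lemma sub_apply' (f g : AddMonoidAlgebra R H) (a : H) : (f - g).coeff a = f.coeff a - g.coeff a := rfl
@[simp] lemma neg_apply' (f : AddMonoidAlgebra R H) (a : H) : (-f).coeff a = -(f.coeff a) := rfl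
@[simp] lemma zero_apply' (a : H) : (0 : AddMonoidAlgebra R H).coeff a = 0 := rfl

lemma comp_apply_pos {d : ℝ} (f : AddMonoidAlgebra R H) {h : H} (hd : χ h = d) :
    (comp χ d f).coeff h = f.coeff h := by
  classical exact Finsupp.filter_apply_pos _ _ hd

lemma comp_apply_neg {d : ℝ} (f : AddMonoidAlgebra R H) {h : H} (hd : χ h ≠ d) :
    (comp χ d f).coeff h = 0 := by
  classical exact Finsupp.filter_apply_neg _ _ hd

lemma comp_add (d : ℝ) (f g : AddMonoidAlgebra R H) :
    comp χ d (f + g) = comp χ d f + comp χ d g := by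
  ext a
  by_cases hd : χ a = d
  · simp [comp_apply_pos χ _ hd, Finsupp.add_apply]
  · simp [comp_apply_neg χ _ hd, Finsupp.add_apply]

lemma comp_zero (d : ℝ) : comp χ d (0 : AddMonoidAlgebra R H) = 0 := by
  ext a
  by_cases hd : χ a = d
  · simp [comp_apply_pos χ _ hd]
  · simp [comp_apply_neg χ _ hd]

lemma comp_one : comp χ 0 (1 : AddMonoidAlgebra R H) = 1 := by
  classical
  have h1 : (1 : AddMonoidAlgebra R H) = AddMonoidAlgebra.single (0 : H) (1 : R) := rfl
  ext a
  by_cases hd : χ a = 0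
  · rw [comp_apply_pos χ _ hd]
  · rw [comp_apply_neg χ _ hd, h1]
    have ha : a ≠ 0 := by rintro rfl; exact hd (map_zero χ)
    simp [AddMonoidAlgebra.coeff_single, Finsupp.single_apply, ha, Ne.symm ha]

lemma comp_single_mul (d : ℝ) (h : H) (c : R) (f : AddMonoidAlgebra R H) :
    comp χ d (AddMonoidAlgebra.single h c * f)
      = AddMonoidAlgebra.single h c * comp χ (d - χ h) f := by
  ext a
  by_cases hd : χ a = d
  · rw [comp_apply_pos χ _ hd, AddMonoidAlgebra.coeff_single_mul_apply,
      AddMonoidAlgebra.coeff_single_mul_apply,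
      comp_apply_pos χ _ (by rw [map_add, map_neg, hd]; ring)]
  · rw [comp_apply_neg χ _ hd, AddMonoidAlgebra.coeff_single_mul_apply,
      comp_apply_neg χ _ (fun hc => hd (by rw [map_add, map_neg] at hc; linarith)), mul_zero]

/-- `Bdd d f` : every exponent in the support of `f` has `χ`-value at least `d`. -/
def Bdd (d : ℝ) (f : AddMonoidAlgebra R H) : Prop := ∀ h ∈ f.coeff.support, d ≤ χ h

lemma bdd_zero (d : ℝ) : Bdd χ d (0 : AddMonoidAlgebra R H) := by simp [Bdd]

lemma bdd_add {d : ℝ} {f g : AddMonoidAlgebra R H} (hf : Bdd χ d f) (hg : Bdd χ d g) :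
    Bdd χ d (f + g) := by
  classical
  intro h hh
  rcases Finset.mem_union.mp (Finsupp.support_add (g₁ := f.coeff) (g₂ := g.coeff) hh) with h' | h'
  · exact hf h h'
  · exact hg h h'

lemma bdd_single_mul {d : ℝ} (h : H) (c : R) {f : AddMonoidAlgebra R H}
    (hf : Bdd χ d f) : Bdd χ (χ h + d) (AddMonoidAlgebra.single h c * f) := by
  haveI := Classical.decEq H
  intro a ha
  have h2 := AddMonoidAlgebra.support_coeff_mul_subset (AddMonoidAlgebra.single h c) f ha
  rcases Finset.mem_add.mp h2 with ⟨x, hx, y, hy, rfl⟩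
  have hx0 : x = h := by
    have : x ∈ ({h} : Finset H) := Finsupp.support_single_subset hx
    simpa using this
  subst hx0
  have := hf y hy
  simp only [map_add]
  linarith

lemma initialForm_apply_of {f : AddMonoidAlgebra R H} {a : H}
    (hcond : ∀ h' ∈ f.coeff.support, χ a ≤ χ h') : (initialForm χ f).coeff a = f.coeff a := by
  classical
  simp only [initialForm]
  exact @Finsupp.filter_apply_pos H R _ _ (Classical.decPred _) f.coeff _ hcond

lemma initialForm_apply_of_not {f : AddMonoidAlgebra R H} {a : H}
    (hcond : ¬ ∀ h' ∈ f.coeff.support, χ a ≤ χ h') : (initialForm χ f).coeff a = 0 := by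
  classical
  simp only [initialForm]
  exact @Finsupp.filter_apply_neg H R _ _ (Classical.decPred _) f.coeff _ hcond

lemma comp_comp_self (d : ℝ) (f : AddMonoidAlgebra R H) :
    comp χ d (comp χ d f) = comp χ d f := by
  ext a
  by_cases hd : χ a = d
  · rw [comp_apply_pos χ _ hd]
  · rw [comp_apply_neg χ _ hd, comp_apply_neg χ _ hd]

lemma comp_comp_ne {d e : ℝ} (hde : d ≠ e) (f : AddMonoidAlgebra R H) :
    comp χ d (comp χ e f) = 0 := by
  ext a
  by_cases hd : χ a = d
  · rw [comp_apply_pos χ _ hd, comp_apply_neg χ _ (by rw [hd]; exact hde), zero_apply']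
  · rw [comp_apply_neg χ _ hd, zero_apply']

/-- The initial form of a nonzero `f` is its component at the minimal `χ`-value of
its support. -/
lemma initialForm_eq_comp {f : AddMonoidAlgebra R H} (hf : f ≠ 0) :
    initialForm χ f
      = comp χ (f.coeff.support.inf' (Finsupp.support_nonempty_iff.mpr (mt AddMonoidAlgebra.coeff_eq_zero.mp hf)) (fun h => χ h)) f := by
  classical
  classical
  have hne := Finsupp.support_nonempty_iff.mpr (mt AddMonoidAlgebra.coeff_eq_zero.mp hf)
  set d₀ := f.coeff.support.inf' hne (fun h => χ h) with hd₀
  have hd₀eq : ∃ b ∈ f.coeff.support, d₀ = χ b := by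
    obtain ⟨b, hb, hbeq⟩ := Finset.exists_mem_eq_inf' hne (fun h => χ h)
    exact ⟨b, hb, hbeq⟩
  ext a
  by_cases haf : f.coeff a = 0
  · by_cases hc : ∀ h' ∈ f.coeff.support, χ a ≤ χ h'
    · rw [initialForm_apply_of χ hc, haf]
      by_cases hd : χ a = d₀
      · rw [comp_apply_pos χ _ hd, haf]
      · rw [comp_apply_neg χ _ hd]
    · rw [initialForm_apply_of_not χ hc]
      by_cases hd : χ a = d₀
      · rw [comp_apply_pos χ _ hd, haf]
      · rw [comp_apply_neg χ _ hd]
  · have hamem : a ∈ f.coeff.support := Finsupp.mem_support_iff.mpr haf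
    by_cases hd : χ a = d₀
    · rw [comp_apply_pos χ _ hd, initialForm_apply_of χ
        (fun h' hh' => by rw [hd]; exact Finset.inf'_le _ hh')]
    · rw [comp_apply_neg χ _ hd]
      apply initialForm_apply_of_not χ
      intro hc
      obtain ⟨b, hb, hbeq⟩ := hd₀eq
      exact hd (le_antisymm (hbeq ▸ hc b hb) (Finset.inf'_le _ hamem))

/-- Any `χ`-level component of an element of the initial ideal is matched by an
element of `I` supported in levels `≥ d`. -/
lemma exists_lift {I : Ideal (AddMonoidAlgebra R H)} {x : AddMonoidAlgebra R H}
    (hx : x ∈ initialIdeal χ I) (d : ℝ) :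
    ∃ F ∈ I, Bdd χ d F ∧ comp χ d F = comp χ d x := by
  classical
  revert d
  refine Submodule.span_induction (p := fun x _ => ∀ d : ℝ,
      ∃ F ∈ I, Bdd χ d F ∧ comp χ d F = comp χ d x) ?_ ?_ ?_ ?_ hx
  · rintro x ⟨f, hfI, hf0, rfl⟩ d
    have hne : f.coeff.support.Nonempty := Finsupp.support_nonempty_iff.mpr (mt AddMonoidAlgebra.coeff_eq_zero.mp hf0)
    set d₀ := f.coeff.support.inf' hne (fun h => χ h) with hd₀
    by_cases hd : d = d₀
    · subst hd
      refine ⟨f, hfI, fun h hh => Finset.inf'_le _ hh, ?_⟩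
      rw [initialForm_eq_comp χ hf0, comp_comp_self]
    · exact ⟨0, I.zero_mem, bdd_zero χ d, by
        rw [initialForm_eq_comp χ hf0, comp_comp_ne χ hd, comp_zero]⟩
  · intro d
    exact ⟨0, I.zero_mem, bdd_zero χ d, rfl⟩
  · rintro x y - - hx hy d
    obtain ⟨F, hFI, hFb, hFc⟩ := hx d
    obtain ⟨G, hGI, hGb, hGc⟩ := hy d
    exact ⟨F + G, I.add_mem hFI hGI, bdd_add χ hFb hGb, by
      rw [comp_add, comp_add, hFc, hGc]⟩
  · rintro g x - hx
    rw [smul_eq_mul]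
    induction g using AddMonoidAlgebra.induction with
    | zero =>
      intro d
      exact ⟨0, I.zero_mem, bdd_zero χ d, by
        rw [show (0 : AddMonoidAlgebra R H) * x = 0 from zero_mul x]⟩
    | single_add h c g hgs hc ih =>
      intro d
      obtain ⟨G, hGI, hGb, hGc⟩ := ih d
      obtain ⟨F₁, hF₁I, hF₁b, hF₁c⟩ := hx (d - χ h)
      refine ⟨AddMonoidAlgebra.single h c * F₁ + G,
        I.add_mem (Ideal.mul_mem_left _ _ hF₁I) hGI, ?_, ?_⟩
      · refine bdd_add χ ?_ hGb
        have := bdd_single_mul χ h c hF₁b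
        rwa [show χ h + (d - χ h) = d by ring] at this
      · rw [add_mul, comp_add, comp_add, comp_single_mul, comp_single_mul, hGc, hF₁c]

/-- If the initial ideal is the unit ideal, then `I` contains an element `1 + p` with
`p` supported in strictly positive `χ`-levels. -/
lemma exists_one_add_of_top {I : Ideal (AddMonoidAlgebra R H)}
    (htop : initialIdeal χ I = ⊤) :
    ∃ F ∈ I, (∀ h ∈ (F - 1).coeff.support, 0 < χ h) := by
  have h1 : (1 : AddMonoidAlgebra R H) ∈ initialIdeal χ I := by rw [htop]; trivial
  obtain ⟨F, hFI, hFb, hFc⟩ := exists_lift χ h1 0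
  rw [comp_one] at hFc
  refine ⟨F, hFI, ?_⟩
  intro h hh
  have hph : (F - 1).coeff h ≠ 0 := Finsupp.mem_support_iff.mp hh
  rcases lt_trichotomy (χ h) 0 with hlt | heq | hgt
  · exfalso
    have hF0 : F.coeff h = 0 := by
      by_contra hc
      exact absurd (hFb h (Finsupp.mem_support_iff.mpr hc)) (not_le.mpr hlt)
    have h10 : (1 : AddMonoidAlgebra R H).coeff h = 0 := by
      classical
      have hne : h ≠ 0 := fun he => by rw [he, map_zero] at hlt; exact lt_irrefl _ hlt
      show Finsupp.single (0 : H) (1 : R) h = 0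
      rw [Finsupp.single_apply, if_neg (fun he => hne he.symm)]
    apply hph
    rw [sub_apply', hF0, h10, sub_zero]
  · exfalso
    apply hph
    have : F.coeff h = (1 : AddMonoidAlgebra R H).coeff h := by
      rw [← comp_apply_pos χ F heq, hFc]
    rw [sub_apply', this, sub_self]
  · exact hgt

/-- If `I` contains `1 + p` with `p` in strictly positive levels, every element of the
group algebra is, modulo `I`, congruent to an element of the cone subring. -/
lemma exists_cone_rep {I : Ideal (AddMonoidAlgebra R H)} (hI : I ≠ ⊤)
    {F : AddMonoidAlgebra R H} (hFI : F ∈ I) (hFp : ∀ h ∈ (F - 1).coeff.support, 0 < χ h)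
    (x : AddMonoidAlgebra R H) :
    ∃ c : AddMonoidAlgebra R H, (∀ h ∈ c.coeff.support, 0 ≤ χ h) ∧ x - c ∈ I := by
  classical
  set p := F - 1 with hp
  have hF1 : F = 1 + p := by rw [hp]; ring
  have hpne : p ≠ 0 := by
    intro hp0
    apply hI
    rw [Ideal.eq_top_iff_one]
    have : F = 1 := by rw [hF1, hp0, add_zero]
    rwa [this] at hFI
  have hpnon : p.coeff.support.Nonempty := Finsupp.support_nonempty_iff.mpr (mt AddMonoidAlgebra.coeff_eq_zero.mp hpne)
  set δ := p.coeff.support.inf' hpnon (fun h => χ h) with hδdef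
  have hδpos : 0 < δ := by
    rw [hδdef, Finset.lt_inf'_iff]
    intro b hb
    exact hFp b hb
  have hδle : ∀ h ∈ p.coeff.support, δ ≤ χ h := fun h hh => Finset.inf'_le _ hh
  -- main induction
  have key : ∀ n : ℕ, ∀ y : AddMonoidAlgebra R H,
      (∀ h ∈ y.coeff.support, -(n * δ) ≤ χ h) →
      ∃ c : AddMonoidAlgebra R H, (∀ h ∈ c.coeff.support, 0 ≤ χ h) ∧ y - c ∈ I := by
    intro n
    induction n with
    | zero =>
      intro y hy
      refine ⟨y, fun h hh => ?_, by rw [sub_self]; exact I.zero_mem⟩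
      have := hy h hh
      simpa using this
    | succ n ih =>
      intro y hy
      set yneg : AddMonoidAlgebra R H := AddMonoidAlgebra.ofCoeff (Finsupp.filter (fun h => χ h < 0) y.coeff) with hyneg
      set y' := y - yneg * F with hy'
      have hxx' : y - y' = yneg * F := by rw [hy']; ring
      have hy'eq : y' = (y - yneg) - yneg * p := by
        rw [hy', hF1]; ring
      have hy'supp : ∀ h ∈ y'.coeff.support, -(n * δ) ≤ χ h := by
        intro h hh
        rw [hy'eq, AddMonoidAlgebra.coeff_sub] at hh
        rcases Finset.mem_union.mp (Finsupp.support_sub hh) with hcase | hcase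
        · -- h in support of y - yneg : nonnegative level
          have hval : (y - yneg).coeff h ≠ 0 := Finsupp.mem_support_iff.mp hcase
          have : ¬ χ h < 0 := by
            intro hneg
            apply hval
            rw [sub_apply', hyneg, AddMonoidAlgebra.coeff_ofCoeff,
              Finsupp.filter_apply_pos (fun h : H => χ h < 0) y.coeff hneg, sub_self]
          have h0 : (0 : ℝ) ≤ χ h := not_lt.mp this
          have hnδ : (0 : ℝ) ≤ n * δ := by positivity
          linarith
        · -- h in support of yneg * p
          have h2 := AddMonoidAlgebra.support_coeff_mul_subset yneg p hcase
          rcases Finset.mem_add.mp h2 with ⟨a, ha, b, hb, rfl⟩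
          have hay : a ∈ y.coeff.support := by
            have : a ∈ y.coeff.support.filter (fun h => χ h < 0) := by
              rwa [← Finsupp.support_filter]
            exact (Finset.mem_filter.mp this).1
          have h3 : -((n + 1 : ℕ) * δ) ≤ χ a := hy a hay
          have h4 : δ ≤ χ b := hδle b hb
          have : ((n + 1 : ℕ) : ℝ) * δ = n * δ + δ := by push_cast; ring
          rw [map_add]
          rw [this] at h3
          linarith
      obtain ⟨c, hc, hcI⟩ := ih y' hy'supp
      refine ⟨c, hc, ?_⟩
      have : y - c = yneg * F + (y' - c) := by rw [hy']; ring
      rw [this]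
      exact I.add_mem (Ideal.mul_mem_left _ _ hFI) hcI
  -- find a suitable n for x
  rcases Finset.eq_empty_or_nonempty x.coeff.support with hxe | hxne
  · refine key 0 x ?_
    intro h hh
    rw [hxe] at hh
    exact absurd hh (Finset.notMem_empty h)
  · set C := x.coeff.support.inf' hxne (fun h => χ h) with hC
    obtain ⟨n, hn⟩ := exists_nat_ge ((-C) / δ)
    refine key n x ?_
    intro h hh
    have h1 : C ≤ χ h := Finset.inf'_le _ hh
    have h2 : -C ≤ n * δ := by
      rw [div_le_iff₀ hδpos] at hn
      linarith
    linarith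

/-- If the initial ideal is the unit ideal, `R[H]/I` is generated by `1` over the cone
subring, hence a finite module. -/
lemma finite_of_initialIdeal_eq_top {I : Ideal (AddMonoidAlgebra R H)} (hI : I ≠ ⊤)
    (htop : initialIdeal χ I = ⊤) :
    Module.Finite (coneSubring R χ) (AddMonoidAlgebra R H ⧸ I) := by
  obtain ⟨F, hFI, hFp⟩ := exists_one_add_of_top χ htop
  refine ⟨⟨{Ideal.Quotient.mk I 1}, ?_⟩⟩
  rw [eq_top_iff]
  rintro q -
  obtain ⟨x, rfl⟩ := Ideal.Quotient.mk_surjective q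
  obtain ⟨c, hc, hcI⟩ := exists_cone_rep χ hI hFI hFp x
  have h1 : Ideal.Quotient.mk I x = (⟨c, hc⟩ : coneSubring R χ) • (Ideal.Quotient.mk I 1) := by
    have h2 : (⟨c, hc⟩ : coneSubring R χ) • (Ideal.Quotient.mk I 1)
        = Ideal.Quotient.mk I (c * 1) := rfl
    rw [h2, mul_one]
    exact (Ideal.Quotient.mk_eq_mk_iff_sub_mem x c).mpr hcI
  rw [h1]
  exact Submodule.smul_mem _ _ (Submodule.subset_span (by simp))

/-- If `R[H]/I` is module-finite over the cone subring and `χ ≠ 0`, the initial ideal is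
the unit ideal: a monic integral equation for (the class of) an invertible monomial of
strictly negative `χ`-degree produces an element of `I` whose initial form is a unit
monomial. -/
lemma initialIdeal_eq_top_of_finite {I : Ideal (AddMonoidAlgebra R H)} (hI : I ≠ ⊤)
    (hχ : χ ≠ 0)
    (hfin : Module.Finite (coneSubring R χ) (AddMonoidAlgebra R H ⧸ I)) :
    initialIdeal χ I = ⊤ := by
  classical
  have hntR : Nontrivial R := by
    rcases subsingleton_or_nontrivial R with hsub | hnt
    · exfalso
      apply hI
      rw [Ideal.eq_top_iff_one]
      have h10 : (1 : AddMonoidAlgebra R H) = 0 := by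
        ext a; exact Subsingleton.elim _ _
      rw [h10]; exact I.zero_mem
    · exact hnt
  obtain ⟨h₁, hh₁⟩ : ∃ h, χ h ≠ 0 := by
    by_contra hc
    push_neg at hc
    exact hχ (AddMonoidHom.ext fun h => by rw [hc h]; rfl)
  obtain ⟨h₀, hneg⟩ : ∃ h₀ : H, χ h₀ < 0 := by
    rcases lt_or_gt_of_ne hh₁ with hlt | hgt
    · exact ⟨h₁, hlt⟩
    · exact ⟨-h₁, by rw [map_neg]; linarith⟩
  set t : AddMonoidAlgebra R H := AddMonoidAlgebra.single h₀ 1 with ht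
  obtain ⟨P, hPm, hP0⟩ := IsIntegral.of_finite (coneSubring R χ) (Ideal.Quotient.mk I t)
  set k := P.natDegree with hk
  set F : AddMonoidAlgebra R H := Polynomial.aeval t P with hF
  have hFI : F ∈ I := by
    rw [← Ideal.Quotient.eq_zero_iff_mem, hF,
      show Ideal.Quotient.mk I (Polynomial.aeval t P)
          = Polynomial.aeval (Ideal.Quotient.mk I t) P from
        (Polynomial.aeval_algHom_apply (Ideal.Quotient.mkₐ (coneSubring R χ) I) t P).symm]
    rwa [Polynomial.aeval_def]
  have hk0 : k ≠ 0 := by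
    intro hk0
    have hP1 : P = 1 := Polynomial.eq_one_of_monic_natDegree_zero hPm hk0
    apply hI
    rw [Ideal.eq_top_iff_one]
    have hF1 : F = 1 := by rw [hF, hP1, map_one]
    rwa [hF1] at hFI
  have hFsum : F = ∑ i ∈ Finset.range (k + 1), ↑(P.coeff i) * t ^ i := by
    rw [hF, Polynomial.aeval_eq_sum_range]; rfl
  set G : AddMonoidAlgebra R H := ∑ i ∈ Finset.range k, ↑(P.coeff i) * t ^ i with hG
  have hFG : F = t ^ k + G := by
    rw [hFsum, Finset.sum_range_succ,
      show P.coeff k = 1 from hPm.coeff_natDegree, OneMemClass.coe_one, one_mul, add_comm]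
  have htpow : ∀ i : ℕ, t ^ i = AddMonoidAlgebra.single (i • h₀) (1 : R) := fun i => by
    rw [ht, AddMonoidAlgebra.single_pow, one_pow]
  have hχsmul : ∀ i : ℕ, χ (i • h₀) = i * χ h₀ := fun i => by
    rw [map_nsmul, nsmul_eq_mul]
  have hGsupp : ∀ h ∈ G.coeff.support, ((k : ℝ) - 1) * χ h₀ ≤ χ h := by
    intro h hh
    rw [hG, AddMonoidAlgebra.coeff_sum] at hh
    obtain ⟨i, hi, hmem⟩ := Finsupp.mem_support_finset_sum _ hh
    obtain ⟨a, ha, b, hb, rfl⟩ :=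
      Finset.mem_add.mp (AddMonoidAlgebra.support_coeff_mul_subset _ _ hmem)
    have hb' : b = i • h₀ := by
      have : b ∈ ({i • h₀} : Finset H) := by
        rw [htpow i] at hb; exact Finsupp.support_single_subset hb
      simpa using this
    have ha' : (0 : ℝ) ≤ χ a := (P.coeff i).2 a ha
    subst hb'
    rw [map_add, hχsmul i]
    have hik : (i : ℝ) ≤ (k : ℝ) - 1 := by
      have h1 : i < k := Finset.mem_range.mp hi
      have h2 : (i : ℝ) + 1 ≤ k := by exact_mod_cast Nat.succ_le_of_lt h1
      linarith
    have h3 : ((k : ℝ) - 1) * χ h₀ ≤ (i : ℝ) * χ h₀ :=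
      mul_le_mul_of_nonpos_right hik (le_of_lt hneg)
    linarith
  have hGk : G.coeff (k • h₀) = 0 := by
    by_contra hc
    have hmem : k • h₀ ∈ G.coeff.support := Finsupp.mem_support_iff.mpr hc
    have h1 := hGsupp _ hmem
    rw [hχsmul k] at h1
    have h2 : ((k : ℝ) - 1) * χ h₀ = k * χ h₀ - χ h₀ := by ring
    linarith
  have hFk : F.coeff (k • h₀) = 1 := by
    rw [hFG, add_apply', htpow k, AddMonoidAlgebra.coeff_single, Finsupp.single_eq_same, hGk, add_zero]
  have hFne : F ≠ 0 := fun h0 => by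
    rw [h0, zero_apply'] at hFk
    exact one_ne_zero hFk.symm
  have hkmem : k • h₀ ∈ F.coeff.support :=
    Finsupp.mem_support_iff.mpr (by rw [hFk]; exact one_ne_zero)
  have hlt : ∀ h ∈ F.coeff.support, h ≠ k • h₀ → χ (k • h₀) < χ h := by
    intro h hh hne
    rw [hFG, AddMonoidAlgebra.coeff_add] at hh
    rcases Finset.mem_union.mp (Finsupp.support_add hh) with hcase | hcase
    · exfalso
      apply hne
      have : h ∈ ({k • h₀} : Finset H) := by
        rw [htpow k] at hcase; exact Finsupp.support_single_subset hcase
      simpa using this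
    · have h1 := hGsupp h hcase
      rw [hχsmul k]
      have h2 : ((k : ℝ) - 1) * χ h₀ = k * χ h₀ - χ h₀ := by ring
      linarith
  have hin : initialForm χ F = AddMonoidAlgebra.single (k • h₀) (1 : R) := by
    have hcond : ∀ h' ∈ F.coeff.support, χ (k • h₀) ≤ χ h' := by
      intro h' hh'
      rcases eq_or_ne h' (k • h₀) with he | he
      · rw [he]
      · exact le_of_lt (hlt h' hh' he)
    ext a
    by_cases hak : a = k • h₀
    · subst hak
      rw [initialForm_apply_of χ hcond, hFk, AddMonoidAlgebra.coeff_single, Finsupp.single_eq_same]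
    · have hsa : (AddMonoidAlgebra.single (k • h₀) (1 : R)).coeff a = 0 := by
        show Finsupp.single (k • h₀) (1 : R) a = 0
        rw [Finsupp.single_apply, if_neg (fun he => hak he.symm)]
      by_cases hFa : F.coeff a = 0
      · by_cases hc : ∀ h' ∈ F.coeff.support, χ a ≤ χ h'
        · rw [initialForm_apply_of χ hc, hFa, hsa]
        · rw [initialForm_apply_of_not χ hc, hsa]
      · have hamem : a ∈ F.coeff.support := Finsupp.mem_support_iff.mpr hFa
        have hnc : ¬ ∀ h' ∈ F.coeff.support, χ a ≤ χ h' := fun hc =>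
          absurd (hc _ hkmem) (not_le.mpr (hlt a hamem hak))
        rw [initialForm_apply_of_not χ hnc, hsa]
  have hmem : AddMonoidAlgebra.single (k • h₀) (1 : R) ∈ initialIdeal χ I :=
    Ideal.subset_span ⟨F, hFI, hFne, hin.symm⟩
  rw [Ideal.eq_top_iff_one]
  have hone : (1 : AddMonoidAlgebra R H)
      = AddMonoidAlgebra.single (-(k • h₀)) (1 : R) * AddMonoidAlgebra.single (k • h₀) (1 : R) := by
    rw [AddMonoidAlgebra.single_mul_single, neg_add_cancel, one_mul]
    rfl
  rw [hone]
  exact Ideal.mul_mem_left _ _ hmem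

end Statement8Aux

/-- For `R` commutative Noetherian, `H` a finitely generated abelian group of
positive rank, `I ⊊ RH` a proper ideal and `χ : H → ℝ` a nonzero character:
`in_χ(I) ≠ RH` iff `RH/I` is *not* finitely generated over `RH_χ`.  (Hence the projection of
`Trop_R(I)` to the character sphere is `Σᶜ(RH/I)`.) -/
theorem initialIdeal_ne_top_iff_not_finite_over_cone
    (R : Type*) [CommRing R] [IsNoetherianRing R]
    (H : Type*) [AddCommGroup H] [AddGroup.FG H] [Infinite H]
    (I : Ideal (AddMonoidAlgebra R H)) (hI : I ≠ ⊤)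
    (χ : H →+ ℝ) (hχ : χ ≠ 0) :
    initialIdeal χ I ≠ ⊤ ↔
      ¬ Module.Finite (coneSubring R χ) (AddMonoidAlgebra R H ⧸ I) := by
  constructor
  · intro hne hfin
    exact hne (Statement8Aux.initialIdeal_eq_top_of_finite χ hI hχ hfin)
  · intro hnf htop
    exact hnf (Statement8Aux.finite_of_initialIdeal_eq_top χ hI htop)
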